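/- arXiv:1011.1820 — 2 statements merged into one kernel-verified Lean document; each statement's English description precedes it below -/
import Mathlib

section
/- Let B be a unital K-algebra with a strong involution σ and q,r∈K nonzero. Then the algebra B̄(q,r) is flexible if and only if B is flexible. -/
/-- The multiplication of the tripling `B̄(q,r)`, on `B ⊕ B ⊕ B` with
`a + vb + zc ↔ (a, b, c)`:
`(a+vb+zc)(a'+vb'+zc') = (aa' + q b'σ(b) + r c'σ(c)) + v(σ(a)b' + a'b) + z(σ(a)c' + a'c)`. -/
def tMul (K B : Type*) [Field K] [NonAssocRing B] [Module K B]
    (σ : B →ₗ[K] B) (q r : K) : B × B × B → B × B × B → B × B × B :=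
  fun x y =>
    (x.1 * y.1 + q • (y.2.1 * σ x.2.1) + r • (y.2.2 * σ x.2.2),
     σ x.1 * y.2.1 + y.1 * x.2.1,
     σ x.1 * y.2.2 + y.1 * x.2.2)

/-- The lifted involution `σ̄` on `B̄(q,r)`: `σ̄(a+vb+zc) = σ(a) − vb − zc`. -/
def tInv (K B : Type*) [Field K] [NonAssocRing B] [Module K B]
    (σ : B →ₗ[K] B) : B × B × B → B × B × B :=
  fun x => (σ x.1, -x.2.1, -x.2.2)

/-!
`B` is the subalgebra `a ↦ a + v0 + z0` of `B̄(q,r)`, so flexibility descends. Conversely, a strong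
involution has the form `σ b = t_b - b` with `t_b ∈ K`, so `σ b` commutes with `b` (also under
multiplication by a third factor) and the norms `b σ b` and their polarizations `b σ b' + b' σ b`
are scalars. Expanding `(xy)x = x(yx)` componentwise, the `v`- and `z`-parts then hold in any such
algebra, and the scalar part reduces to flexibility of `B` together with its linearization
`(uv)w + (wv)u = u(vw) + w(vu)`.
-/

open Submodule

theorem flexible_linearized {B : Type*} [NonUnitalNonAssocRing B]
    (hB : ∀ x y : B, x * y * x = x * (y * x)) (u v w : B) :
    u * v * w + w * v * u = u * (v * w) + w * (v * u) := by
  have h := hB (u + w) v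
  simp only [add_mul, mul_add] at h
  linear_combination (norm := module) h - hB u v - hB w v

section StrongInvolution

variable {K B : Type*} [CommRing K] [NonAssocRing B] [Module K B] {σ : B →ₗ[K] B}

theorem exists_apply_eq_smul_one_sub (htr : ∀ b : B, b + σ b ∈ K ∙ (1 : B)) (b : B) :
    ∃ t : K, σ b = t • 1 - b := by
  obtain ⟨t, ht⟩ := mem_span_singleton.mp (htr b)
  exact ⟨t, by rw [ht]; abel⟩

theorem mul_apply_add_mul_apply_mem (hnr : ∀ b : B, b * σ b ∈ K ∙ (1 : B)) (b b' : B) :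
    b * σ b' + b' * σ b ∈ K ∙ (1 : B) := by
  have h : b * σ b' + b' * σ b = (b + b') * σ (b + b') - b * σ b - b' * σ b' := by
    simp only [map_add, add_mul, mul_add]
    abel
  rw [h]
  exact sub_mem (sub_mem (hnr _) (hnr b)) (hnr b')

variable [SMulCommClass K B B] [IsScalarTower K B B]

theorem mul_apply_mul_comm (htr : ∀ b : B, b + σ b ∈ K ∙ (1 : B)) (x b : B) :
    x * σ b * b = x * b * σ b := by
  obtain ⟨t, ht⟩ := exists_apply_eq_smul_one_sub htr b
  rw [ht]
  simp only [mul_sub, sub_mul, mul_smul_one, smul_mul_assoc]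

theorem apply_mul_self_comm (htr : ∀ b : B, b + σ b ∈ K ∙ (1 : B)) (b : B) :
    σ b * b = b * σ b := by
  simpa only [one_mul] using mul_apply_mul_comm htr 1 b

theorem mul_apply_mul_add_mul_mul_apply (htr : ∀ b : B, b + σ b ∈ K ∙ (1 : B)) (a b b' : B) :
    a * σ b' * b + a * (b' * σ b) = a * (σ b' * b) + a * b' * σ b := by
  obtain ⟨t, ht⟩ := exists_apply_eq_smul_one_sub htr b
  obtain ⟨t', ht'⟩ := exists_apply_eq_smul_one_sub htr b'
  rw [ht, ht']
  simp only [mul_sub, sub_mul, smul_mul_assoc, mul_smul_comm, mul_one, one_mul]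
  module

theorem apply_mul_apply_mul_add (htr : ∀ b : B, b + σ b ∈ K ∙ (1 : B)) (a a' b b' : B) :
    σ a' * σ a * b + a * (σ a * b') + a * (a' * b)
      = σ a * (σ a' * b) + σ a * (a * b') + a' * a * b := by
  obtain ⟨t, ht⟩ := exists_apply_eq_smul_one_sub htr a
  obtain ⟨t', ht'⟩ := exists_apply_eq_smul_one_sub htr a'
  rw [ht, ht']
  simp only [mul_sub, sub_mul, smul_mul_assoc, mul_smul_comm, mul_one, one_mul,
    smul_sub, smul_smul]
  module

theorem mul_apply_mul_eq_mul_mul_apply (hB : ∀ x y : B, x * y * x = x * (y * x))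
    (htr : ∀ b : B, b + σ b ∈ K ∙ (1 : B)) (hnr : ∀ b : B, b * σ b ∈ K ∙ (1 : B)) (b x : B) :
    b * (σ b * x) = x * b * σ b := by
  obtain ⟨n, hn⟩ := mem_span_singleton.mp (hnr b)
  have hn' : σ b * b = n • 1 := by rw [apply_mul_self_comm htr, hn]
  have h := flexible_linearized hB b (σ b) x
  rw [← hn, hn', smul_one_mul, mul_smul_one] at h
  linear_combination (norm := module) mul_apply_mul_comm htr x b - h

theorem apply_mul_mul_add_mul_apply_mul (hB : ∀ x y : B, x * y * x = x * (y * x))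
    (htr : ∀ b : B, b + σ b ∈ K ∙ (1 : B)) (hnr : ∀ b : B, b * σ b ∈ K ∙ (1 : B)) (a b b' : B) :
    b' * σ b * a + b * (σ b' * a) = a * (b * σ b') + a * b' * σ b := by
  obtain ⟨m, hm⟩ := mem_span_singleton.mp (mul_apply_add_mul_apply_mem hnr b b')
  have hcomm : (b * σ b' + b' * σ b) * a = a * (b * σ b' + b' * σ b) := by
    rw [← hm, smul_one_mul, mul_smul_one]
  simp only [add_mul, mul_add] at hcomm
  linear_combination (norm := module) mul_apply_mul_add_mul_mul_apply htr a b b'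
    - flexible_linearized hB b (σ b') a + hcomm

end StrongInvolution

section Tripling

variable {K B : Type*} [Field K] [NonAssocRing B] [Module K B] {σ : B →ₗ[K] B} {q r : K}

theorem tMul_mk_zero_zero (a a' : B) :
    tMul K B σ q r (a, 0, 0) (a', 0, 0) = (a * a', 0, 0) := by
  simp [tMul]

theorem flexible_of_tMul_flexible
    (H : ∀ x y : B × B × B, tMul K B σ q r (tMul K B σ q r x y) x =
      tMul K B σ q r x (tMul K B σ q r y x))
    (a a' : B) : a * a' * a = a * (a' * a) := by
  have h := H (a, 0, 0) (a', 0, 0)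
  simp only [tMul_mk_zero_zero, Prod.mk.injEq] at h
  exact h.1

theorem tMul_flexible [SMulCommClass K B B] [IsScalarTower K B B]
    (hσmul : ∀ x y : B, σ (x * y) = σ y * σ x) (hσinv : ∀ x : B, σ (σ x) = x)
    (htr : ∀ b : B, b + σ b ∈ K ∙ (1 : B)) (hnr : ∀ b : B, b * σ b ∈ K ∙ (1 : B))
    (hB : ∀ x y : B, x * y * x = x * (y * x)) (x y : B × B × B) :
    tMul K B σ q r (tMul K B σ q r x y) x = tMul K B σ q r x (tMul K B σ q r y x) := by
  obtain ⟨a, b, c⟩ := x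
  obtain ⟨a', b', c'⟩ := y
  simp only [tMul, map_add, map_smul, hσmul, hσinv, Prod.mk.injEq]
  simp only [mul_add, add_mul, smul_add, smul_mul_assoc, mul_smul_comm]
  refine ⟨?_, ?_, ?_⟩
  · linear_combination (norm := module) hB a a'
      + q • (apply_mul_mul_add_mul_apply_mul hB htr hnr a b b'
        + mul_apply_mul_eq_mul_mul_apply hB htr hnr b (σ a'))
      + r • (apply_mul_mul_add_mul_apply_mul hB htr hnr a c c'
        + mul_apply_mul_eq_mul_mul_apply hB htr hnr c (σ a'))
  · linear_combination (norm := module) apply_mul_apply_mul_add htr a a' b b'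
  · linear_combination (norm := module) apply_mul_apply_mul_add htr a a' c c'

end Tripling

theorem stmt17_general (K B : Type*) [Field K]
    [NonAssocRing B] [Module K B] [SMulCommClass K B B] [IsScalarTower K B B]
    (σ : B →ₗ[K] B) (hσmul : ∀ x y : B, σ (x * y) = σ y * σ x)
    (hσinv : ∀ x : B, σ (σ x) = x)
    (hσtr : ∀ b : B, b + σ b ∈ Submodule.span K {(1 : B)})
    (hσnr : ∀ b : B, b * σ b ∈ Submodule.span K {(1 : B)})
    (q r : K) :
    (∀ x y : B × B × B, tMul K B σ q r (tMul K B σ q r x y) x =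
        tMul K B σ q r x (tMul K B σ q r y x)) ↔
      (∀ x y : B, x * y * x = x * (y * x)) :=
  ⟨flexible_of_tMul_flexible, tMul_flexible hσmul hσinv hσtr hσnr⟩

/-- `B̄(q,r)` is flexible if and only if `B` is flexible. -/
theorem stmt17 (K B : Type*) [Field K]
    [NonAssocRing B] [Module K B] [SMulCommClass K B B] [IsScalarTower K B B]
    (σ : B →ₗ[K] B) (hσmul : ∀ x y : B, σ (x * y) = σ y * σ x)
    (hσone : σ 1 = 1) (hσinv : ∀ x : B, σ (σ x) = x)
    (hσtr : ∀ b : B, b + σ b ∈ Submodule.span K {(1 : B)})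
    (hσnr : ∀ b : B, b * σ b ∈ Submodule.span K {(1 : B)})
    (q r : K) (hq : q ≠ 0) (hr : r ≠ 0) :
    (∀ x y : B × B × B, tMul K B σ q r (tMul K B σ q r x y) x =
        tMul K B σ q r x (tMul K B σ q r y x)) ↔
      (∀ x y : B, x * y * x = x * (y * x)) :=
  stmt17_general K B σ hσmul hσinv hσtr hσnr q r
end

section
/- Let B be a unital K-algebra with a strong involution σ and q,r∈K nonzero. Then the algebra B̄(q,r) is never alternative: the elements x = v (i.e., 0 + v·1_B + z·0) and y = z (i.e., 0 + v·0 + z·1_B) satisfy (xx)y = qz ≠ 0 = x(xy), so the left alternative law fails in B̄(q,r). -/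
section TriplingProducts

variable {K B : Type*} [Field K] [NonAssocRing B] [Module K B] (σ : B →ₗ[K] B) (q r : K)

theorem tMul_zero_right (x : B × B × B) : tMul K B σ q r x 0 = 0 := by
  simp [tMul]

theorem tMul_v_v (b b' : B) :
    tMul K B σ q r (0, b, 0) (0, b', 0) = (q • (b' * σ b), 0, 0) := by
  simp [tMul]

theorem tMul_v_z (b c : B) : tMul K B σ q r (0, b, 0) (0, 0, c) = 0 := by
  simp [tMul, Prod.ext_iff]

theorem tMul_scalar_z (a c : B) :
    tMul K B σ q r (a, 0, 0) (0, 0, c) = (0, 0, σ a * c) := by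
  simp [tMul]

end TriplingProducts

theorem stmt19_general (K B : Type*) [Field K]
    [NonAssocRing B] [Module K B]
    [Nontrivial B]
    (σ : B →ₗ[K] B)
    (hσone : σ 1 = 1)
    (q r : K) (hq : q ≠ 0) :
    tMul K B σ q r (tMul K B σ q r ((0 : B), (1 : B), (0 : B)) ((0 : B), (1 : B), (0 : B)))
        ((0 : B), (0 : B), (1 : B)) = ((0 : B), (0 : B), q • (1 : B)) ∧
    tMul K B σ q r ((0 : B), (1 : B), (0 : B))
        (tMul K B σ q r ((0 : B), (1 : B), (0 : B)) ((0 : B), (0 : B), (1 : B))) = 0 ∧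
    tMul K B σ q r (tMul K B σ q r ((0 : B), (1 : B), (0 : B)) ((0 : B), (1 : B), (0 : B)))
        ((0 : B), (0 : B), (1 : B)) ≠
      tMul K B σ q r ((0 : B), (1 : B), (0 : B))
        (tMul K B σ q r ((0 : B), (1 : B), (0 : B)) ((0 : B), (0 : B), (1 : B))) := by
  have hxx_y : tMul K B σ q r (tMul K B σ q r (0, 1, 0) (0, 1, 0)) (0, 0, 1) =
      ((0 : B), (0 : B), q • (1 : B)) := by
    rw [tMul_v_v, one_mul, hσone, tMul_scalar_z, map_smul, hσone, mul_one]
  have hx_xy : tMul K B σ q r (0, 1, 0) (tMul K B σ q r (0, 1, 0) (0, 0, 1)) = 0 := by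
    rw [tMul_v_z, tMul_zero_right]
  refine ⟨hxx_y, hx_xy, ?_⟩
  rw [hxx_y, hx_xy]
  intro h
  exact smul_ne_zero hq one_ne_zero (congrArg (fun p : B × B × B => p.2.2) h)

/-- `B̄(q,r)` is never alternative: for `x = v` and `y = z` one has
`(xx)y = qz ≠ 0 = x(xy)`, so the left alternative law fails. -/
theorem stmt19 (K B : Type*) [Field K]
    [NonAssocRing B] [Module K B] [SMulCommClass K B B] [IsScalarTower K B B]
    [Nontrivial B]
    (σ : B →ₗ[K] B) (hσmul : ∀ x y : B, σ (x * y) = σ y * σ x)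
    (hσone : σ 1 = 1) (hσinv : ∀ x : B, σ (σ x) = x)
    (hσtr : ∀ b : B, b + σ b ∈ Submodule.span K {(1 : B)})
    (hσnr : ∀ b : B, b * σ b ∈ Submodule.span K {(1 : B)})
    (q r : K) (hq : q ≠ 0) (hr : r ≠ 0) :
    tMul K B σ q r (tMul K B σ q r ((0 : B), (1 : B), (0 : B)) ((0 : B), (1 : B), (0 : B)))
        ((0 : B), (0 : B), (1 : B)) = ((0 : B), (0 : B), q • (1 : B)) ∧
    tMul K B σ q r ((0 : B), (1 : B), (0 : B))
        (tMul K B σ q r ((0 : B), (1 : B), (0 : B)) ((0 : B), (0 : B), (1 : B))) = 0 ∧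
    tMul K B σ q r (tMul K B σ q r ((0 : B), (1 : B), (0 : B)) ((0 : B), (1 : B), (0 : B)))
        ((0 : B), (0 : B), (1 : B)) ≠
      tMul K B σ q r ((0 : B), (1 : B), (0 : B))
        (tMul K B σ q r ((0 : B), (1 : B), (0 : B)) ((0 : B), (0 : B), (1 : B))) :=
  stmt19_general K B σ hσone q r hq
end
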